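/- arXiv:2503.17838 — 2 statements merged into one kernel-verified Lean document; each statement's English description precedes it below -/
import Mathlib

section
/- Let c2 > 1 and define ω0, ν0, λ0, κ1, κ2 as in the linearized ERTBP, and additionally set d0000 = (ν0² − ω0²)/κ1 and κ3 = (κ2/κ1)·(ν0² − ω0²)/(ν0² + λ0²). Let η, α1, α2, φ1, φ2 ∈ ℝ and α3, φ3 ∈ ℂ, and define x(f) = α1·cos(ω0·f + φ1) + α3·cos(i·λ0·f + φ3), y(f) = κ1·α1·sin(ω0·f + φ1) + i·κ2·α3·sin(i·λ0·f + φ3), z(f) = α2·sin(ν0·f + φ2) + η·α1·sin(ω0·f + φ1) + i·η·κ3·α3·sin(i·λ0·f + φ3). Then for all f ∈ ℝ: x''(f) − 2y'(f) − (1+2c2)·x(f) = 0, y''(f) + 2x'(f) + (c2−1)·y(f) = 0, and z''(f) + c2·z(f) = η·d0000·y(f). (This is the modified linear solution for the coupling of the y-direction motion into the z-direction, associated with the breaking of the S2-type symmetry.) -/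
/-!
Each of `x`, `y`, `z` is a superposition of sinusoids `p cos (b t + c) + q sin (b t + c)`, whose
second derivative is `-b²` times itself. The planar equations therefore reduce, mode by mode, to
the relations `κ · 2b = -(b² + 2c2 + 1)` and `κ (c2 - 1 - b²) = 2b` between a frequency `b` and the
amplitude ratio `κ` of `y` to `x`. Given the first, the second says that `b²` is a root of
`μ² + (c2 - 2) μ + (1 - c2)(2 c2 + 1)`, i.e. `(2b² + c2 - 2)² = 9c2² - 8c2`; the two roots give
`b = ω0, κ = κ1` and `b = i λ0, κ = i κ2`. In the `z`-equation the free mode has `ν0² = c2`, and a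
mode `Z sin (b t + c)` forced by `B sin (b t + c)` in `y` needs `(c2 - b²) Z = η d0000 B`, which for
the two modes is exactly the definition of `d0000` and of `κ3`.
-/

open Complex

noncomputable def sinusoid (b c p q : ℂ) (t : ℝ) : ℂ :=
  p * cos (b * t + c) + q * sin (b * t + c)

theorem hasDerivAt_sinusoid (b c p q : ℂ) (t : ℝ) :
    HasDerivAt (sinusoid b c p q) (sinusoid b c (b * q) (-(b * p)) t) t := by
  have hlin : HasDerivAt (fun w : ℂ => b * w + c) b t := by
    simpa using ((hasDerivAt_id (t : ℂ)).const_mul b).add_const c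
  convert ((hlin.ccos.const_mul p).fun_add (hlin.csin.const_mul q)).comp_ofReal using 1
  · rfl
  · simp only [sinusoid]
    ring

theorem deriv_sinusoid (b c p q : ℂ) :
    deriv (sinusoid b c p q) = sinusoid b c (b * q) (-(b * p)) :=
  funext fun t => (hasDerivAt_sinusoid b c p q t).deriv

theorem differentiable_sinusoid (b c p q : ℂ) : Differentiable ℝ (sinusoid b c p q) :=
  fun t => (hasDerivAt_sinusoid b c p q t).differentiableAt

theorem deriv_add_sinusoid {g : ℝ → ℂ} (hg : Differentiable ℝ g) (b c p q : ℂ) :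
    deriv (g + sinusoid b c p q) = deriv g + sinusoid b c (b * q) (-(b * p)) :=
  funext fun t => by
    rw [Pi.add_apply, deriv_add (hg t) (differentiable_sinusoid b c p q t), deriv_sinusoid]

section Modes

variable {K : Type*} [Field K]

def IsPlanarMode (c2 b κ : K) : Prop :=
  κ * (2 * b) = -(b ^ 2 + 2 * c2 + 1) ∧ κ * (c2 - 1 - b ^ 2) = 2 * b

theorem isPlanarMode_of_sq [CharZero K] {c2 b : K} (hb : b ≠ 0)
    (hchar : (2 * b ^ 2 + c2 - 2) ^ 2 = 9 * c2 ^ 2 - 8 * c2) :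
    IsPlanarMode c2 b (-(b ^ 2 + 2 * c2 + 1) / (2 * b)) := by
  constructor
  · field_simp
  · field_simp
    linear_combination (1 / 4 : K) * hchar

end Modes

theorem abs_two_sub_lt_sqrt {c2 : ℝ} (hc2 : 1 < c2) : |2 - c2| < √(9 * c2 ^ 2 - 8 * c2) := by
  rw [Real.lt_sqrt (abs_nonneg _), sq_abs]
  nlinarith

theorem sq_two_mul_sqrt_half_sq_sub {u v : ℝ} (hv : 0 ≤ v) (h : 0 ≤ u + √v) :
    (2 * √((u + √v) / 2) ^ 2 - u) ^ 2 = v := by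
  rw [Real.sq_sqrt (by linarith), mul_div_cancel₀ _ two_ne_zero, add_sub_cancel_left,
    Real.sq_sqrt hv]

theorem isPlanarMode_omega0 {c2 ω0 κ1 : ℝ} (hc2 : 1 < c2)
    (hω0 : ω0 = √((2 - c2 + √(9 * c2 ^ 2 - 8 * c2)) / 2))
    (hκ1 : κ1 = -(ω0 ^ 2 + 2 * c2 + 1) / (2 * ω0)) :
    0 < ω0 ∧ IsPlanarMode (c2 : ℂ) ω0 κ1 := by
  have hpos : 0 < 2 - c2 + √(9 * c2 ^ 2 - 8 * c2) := by
    linarith [neg_abs_le (2 - c2), abs_two_sub_lt_sqrt hc2]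
  have hω0pos : 0 < ω0 := hω0 ▸ Real.sqrt_pos.mpr (by linarith)
  have hchar : (2 * ω0 ^ 2 + c2 - 2) ^ 2 = 9 * c2 ^ 2 - 8 * c2 := by
    rw [hω0]
    linear_combination sq_two_mul_sqrt_half_sq_sub (by nlinarith) hpos.le
  have hcharℂ : (2 * (ω0 : ℂ) ^ 2 + c2 - 2) ^ 2 = 9 * (c2 : ℂ) ^ 2 - 8 * c2 := by
    exact_mod_cast hchar
  refine ⟨hω0pos, ?_⟩
  convert isPlanarMode_of_sq (by exact_mod_cast hω0pos.ne') hcharℂ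
  rw [hκ1]
  push_cast
  rfl

theorem isPlanarMode_I_mul_lam0 {c2 lam0 κ2 : ℝ} (hc2 : 1 < c2)
    (hlam0 : lam0 = √((c2 - 2 + √(9 * c2 ^ 2 - 8 * c2)) / 2))
    (hκ2 : κ2 = -(lam0 ^ 2 - 2 * c2 - 1) / (2 * lam0)) :
    IsPlanarMode (c2 : ℂ) (I * lam0) (I * κ2) := by
  have hpos : 0 < c2 - 2 + √(9 * c2 ^ 2 - 8 * c2) := by
    linarith [le_abs_self (2 - c2), abs_two_sub_lt_sqrt hc2]
  have hlam0pos : 0 < lam0 := hlam0 ▸ Real.sqrt_pos.mpr (by linarith)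
  have hchar : (2 * lam0 ^ 2 - c2 + 2) ^ 2 = 9 * c2 ^ 2 - 8 * c2 := by
    rw [hlam0]
    linear_combination sq_two_mul_sqrt_half_sq_sub (by nlinarith) hpos.le
  have hlam0ℂ : (lam0 : ℂ) ≠ 0 := by exact_mod_cast hlam0pos.ne'
  convert isPlanarMode_of_sq (mul_ne_zero I_ne_zero hlam0ℂ) ?_ using 1
  · rw [hκ2]
    push_cast
    field_simp
    linear_combination (2 * c2 + 1 : ℂ) * I_sq
  · have hcharℂ : (2 * (lam0 : ℂ) ^ 2 - c2 + 2) ^ 2 = 9 * (c2 : ℂ) ^ 2 - 8 * c2 := by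
      exact_mod_cast hchar
    rw [mul_pow, I_sq]
    linear_combination hcharℂ

theorem planar_system_two_modes {c2 b₁ b₂ k₁ k₂ : ℂ} (h₁ : IsPlanarMode c2 b₁ k₁)
    (h₂ : IsPlanarMode c2 b₂ k₂) {φ₁ φ₂ A₁ A₂ : ℂ} {x y : ℝ → ℂ}
    (hx : x = sinusoid b₁ φ₁ A₁ 0 + sinusoid b₂ φ₂ A₂ 0)
    (hy : y = sinusoid b₁ φ₁ 0 (k₁ * A₁) + sinusoid b₂ φ₂ 0 (k₂ * A₂)) (f : ℝ) :
    deriv (deriv x) f - 2 * deriv y f - (1 + 2 * c2) * x f = 0 ∧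
      deriv (deriv y) f + 2 * deriv x f + (c2 - 1) * y f = 0 := by
  subst hx hy
  simp only [deriv_add_sinusoid, deriv_sinusoid, differentiable_sinusoid, Pi.add_apply, sinusoid]
  constructor
  · linear_combination (-A₁ * cos (b₁ * f + φ₁)) * h₁.1 - A₂ * cos (b₂ * f + φ₂) * h₂.1
  · linear_combination A₁ * sin (b₁ * f + φ₁) * h₁.2 + A₂ * sin (b₂ * f + φ₂) * h₂.2

theorem forced_oscillator_two_modes {c2 ν b₁ b₂ B₁ B₂ Z₁ Z₂ F : ℂ} (hν : ν ^ 2 = c2)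
    (h₁ : (c2 - b₁ ^ 2) * Z₁ = F * B₁) (h₂ : (c2 - b₂ ^ 2) * Z₂ = F * B₂)
    {φ φ₁ φ₂ A : ℂ} {y z : ℝ → ℂ} (hy : y = sinusoid b₁ φ₁ 0 B₁ + sinusoid b₂ φ₂ 0 B₂)
    (hz : z = sinusoid ν φ 0 A + sinusoid b₁ φ₁ 0 Z₁ + sinusoid b₂ φ₂ 0 Z₂) (f : ℝ) :
    deriv (deriv z) f + c2 * z f = F * y f := by
  subst hy hz
  simp only [deriv_add_sinusoid, deriv_sinusoid, differentiable_sinusoid, Differentiable.add,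
    Pi.add_apply, sinusoid]
  linear_combination -A * sin (ν * f + φ) * hν + sin (b₁ * f + φ₁) * h₁ + sin (b₂ * f + φ₂) * h₂

/-- The modified linear solution for the coupling of the y-direction motion
into the z-direction (associated with the breaking of the S2-type symmetry)
solves the modified linear system `x'' − 2y' − (1+2c2)x = 0`,
`y'' + 2x' + (c2−1)y = 0`, `z'' + c2·z = η·d0000·y`. -/
theorem ertbp_modified_linear_solution_y_to_z (c2 : ℝ) (hc2 : 1 < c2)
    (ω0 ν0 lam0 κ1 κ2 κ3 d0000 : ℝ)
    (hω0 : ω0 = Real.sqrt ((2 - c2 + Real.sqrt (9 * c2 ^ 2 - 8 * c2)) / 2))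
    (hν0 : ν0 = Real.sqrt c2)
    (hlam0 : lam0 = Real.sqrt ((c2 - 2 + Real.sqrt (9 * c2 ^ 2 - 8 * c2)) / 2))
    (hκ1 : κ1 = -(ω0 ^ 2 + 2 * c2 + 1) / (2 * ω0))
    (hκ2 : κ2 = -(lam0 ^ 2 - 2 * c2 - 1) / (2 * lam0))
    (hd : d0000 = (ν0 ^ 2 - ω0 ^ 2) / κ1)
    (hκ3 : κ3 = (κ2 / κ1) * ((ν0 ^ 2 - ω0 ^ 2) / (ν0 ^ 2 + lam0 ^ 2)))
    (η α1 α2 φ1 φ2 : ℝ) (α3 φ3 : ℂ) (x y z : ℝ → ℂ)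
    (hx : x = fun f : ℝ =>
      (α1 : ℂ) * Complex.cos ((ω0 : ℂ) * f + (φ1 : ℂ))
        + α3 * Complex.cos (Complex.I * (lam0 : ℂ) * f + φ3))
    (hy : y = fun f : ℝ =>
      (κ1 : ℂ) * (α1 : ℂ) * Complex.sin ((ω0 : ℂ) * f + (φ1 : ℂ))
        + Complex.I * (κ2 : ℂ) * α3 * Complex.sin (Complex.I * (lam0 : ℂ) * f + φ3))
    (hz : z = fun f : ℝ =>
      (α2 : ℂ) * Complex.sin ((ν0 : ℂ) * f + (φ2 : ℂ))
        + (η : ℂ) * (α1 : ℂ) * Complex.sin ((ω0 : ℂ) * f + (φ1 : ℂ))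
        + Complex.I * (η : ℂ) * (κ3 : ℂ) * α3
            * Complex.sin (Complex.I * (lam0 : ℂ) * f + φ3)) :
    ∀ f : ℝ,
      deriv (deriv x) f - 2 * deriv y f - (1 + 2 * (c2 : ℂ)) * x f = 0 ∧
      deriv (deriv y) f + 2 * deriv x f + ((c2 : ℂ) - 1) * y f = 0 ∧
      deriv (deriv z) f + (c2 : ℂ) * z f = (η : ℂ) * (d0000 : ℂ) * y f := by
  obtain ⟨hω0pos, hmodeω⟩ := isPlanarMode_omega0 hc2 hω0 hκ1
  have hmodeLam := isPlanarMode_I_mul_lam0 hc2 hlam0 hκ2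
  have hν0 : ν0 ^ 2 = c2 := hν0 ▸ Real.sq_sqrt (by linarith)
  have hκ1ne : κ1 ≠ 0 := by
    rw [hκ1]
    exact div_ne_zero (by nlinarith : -(ω0 ^ 2 + 2 * c2 + 1) < 0).ne (by positivity)
  have hforcedω : (c2 - ω0 ^ 2) * (η * α1) = η * d0000 * (κ1 * α1) := by
    rw [hd, hν0]
    field_simp
  have hforcedLam : (c2 + lam0 ^ 2) * κ3 = d0000 * κ2 := by
    rw [hκ3, hd, hν0]
    field_simp
  have hx' : x = sinusoid ω0 φ1 α1 0 + sinusoid (I * lam0) φ3 α3 0 := by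
    subst hx; funext t; simp [sinusoid]
  have hy' : y = sinusoid ω0 φ1 0 (κ1 * α1) + sinusoid (I * lam0) φ3 0 (I * κ2 * α3) := by
    subst hy; funext t; simp [sinusoid]
  have hz' : z = sinusoid ν0 φ2 0 α2 + sinusoid ω0 φ1 0 (η * α1)
      + sinusoid (I * lam0) φ3 0 (I * η * κ3 * α3) := by
    subst hz; funext t; simp [sinusoid]
  intro f
  obtain ⟨hplanar₁, hplanar₂⟩ := planar_system_two_modes hmodeω hmodeLam hx' hy' f
  refine ⟨hplanar₁, hplanar₂, forced_oscillator_two_modes (by exact_mod_cast hν0) ?_ ?_ hy' hz' f⟩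
  · exact_mod_cast hforcedω
  · have h : ((c2 : ℂ) + lam0 ^ 2) * κ3 = d0000 * κ2 := by exact_mod_cast hforcedLam
    rw [mul_pow, I_sq]
    linear_combination (I * η * α3) * h
end

section
/- Let c2 > 1 and define ω0, ν0, λ0, κ1, κ2 as in the linearized ERTBP, and additionally set d0000 = 1/(2ν0) − ν0/2 and κ3 = −1/(2ν0) − 3ν0/2. Let η, α1, α2, φ1, φ2 ∈ ℝ and α3, φ3 ∈ ℂ, and define x(f) = α1·cos(ω0·f + φ1) + η·α2·cos(ν0·f + φ2) + α3·cos(i·λ0·f + φ3), y(f) = κ1·α1·sin(ω0·f + φ1) + η·κ3·α2·sin(ν0·f + φ2) + i·κ2·α3·sin(i·λ0·f + φ3), z(f) = α2·sin(ν0·f + φ2). Then for all f ∈ ℝ: x''(f) − 2y'(f) − (1+2c2)·x(f) = 0, y''(f) + 2x'(f) + (c2−1)·y(f) = η·d0000·z(f), and z''(f) + c2·z(f) = 0. (This is the modified linear solution for the coupling of the z-direction motion into the y-direction, associated with the breaking of the S2-type symmetry.) -/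
/-!
Every term of `x` and `y` is a normal mode `(a cos (k t + φ), κ(k) a sin (k t + φ))` with
`k ∈ {ω₀, ν₀, i λ₀}` and `κ(k) = -(k² + 2 c₂ + 1) / (2 k)` (so `κ₁ = κ(ω₀)`, `i κ₂ = κ(i λ₀)`,
`κ₃ = κ(ν₀)`). For such a mode the first equation holds identically and the second one leaves the
residual `a p(k) / (2 k) sin (k t + φ)`, where `p(k) = k⁴ + (c₂ - 2) k² - (2 c₂ + 1)(c₂ - 1)`.
Both `ω₀²` and `(i λ₀)² = -λ₀²` are roots `(2 - c₂ ± √(9 c₂² - 8 c₂)) / 2` of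
`w² + (c₂ - 2) w - (2 c₂ + 1)(c₂ - 1)`, so those modes are exact, whereas `ν₀² = c₂` gives
`p(ν₀) / (2 ν₀) = (1 - c₂) / (2 ν₀) = d0000`: this is the forcing `η d0000 z`.
-/

open Complex Finset

section Modes

variable (a k φ : ℂ)

theorem hasDerivAt_mul_cos_mul_add (t : ℝ) :
    HasDerivAt (fun u : ℝ => a * cos (k * u + φ)) (-(a * k) * sin (k * t + φ)) t := by
  have := (((hasDerivAt_id (t : ℂ)).const_mul k).add_const φ).ccos.const_mul a
  exact (this.congr_deriv (by simp only [id_eq]; ring)).comp_ofReal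

theorem hasDerivAt_mul_sin_mul_add (t : ℝ) :
    HasDerivAt (fun u : ℝ => a * sin (k * u + φ)) (a * k * cos (k * t + φ)) t := by
  have := (((hasDerivAt_id (t : ℂ)).const_mul k).add_const φ).csin.const_mul a
  exact (this.congr_deriv (by simp only [id_eq]; ring)).comp_ofReal

theorem deriv_mul_cos_mul_add :
    deriv (fun u : ℝ => a * cos (k * u + φ)) = fun t : ℝ => -(a * k) * sin (k * t + φ) :=
  funext fun t => (hasDerivAt_mul_cos_mul_add a k φ t).deriv

theorem deriv_mul_sin_mul_add :
    deriv (fun u : ℝ => a * sin (k * u + φ)) = fun t : ℝ => a * k * cos (k * t + φ) :=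
  funext fun t => (hasDerivAt_mul_sin_mul_add a k φ t).deriv

end Modes

section Superposition

variable {ι : Type*} (s : Finset ι) (a k φ : ι → ℂ)

theorem deriv_sum_mul_cos_mul_add :
    deriv (fun u : ℝ => ∑ i ∈ s, a i * cos (k i * u + φ i)) =
      fun t : ℝ => ∑ i ∈ s, -(a i * k i) * sin (k i * t + φ i) :=
  funext fun t =>
    (HasDerivAt.fun_sum fun i _ => hasDerivAt_mul_cos_mul_add (a i) (k i) (φ i) t).deriv

theorem deriv_sum_mul_sin_mul_add :
    deriv (fun u : ℝ => ∑ i ∈ s, a i * sin (k i * u + φ i)) =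
      fun t : ℝ => ∑ i ∈ s, a i * k i * cos (k i * t + φ i) :=
  funext fun t =>
    (HasDerivAt.fun_sum fun i _ => hasDerivAt_mul_sin_mul_add (a i) (k i) (φ i) t).deriv

end Superposition

namespace ERTBP

noncomputable def planarRatio (c k : ℂ) : ℂ := -(k ^ 2 + 2 * c + 1) / (2 * k)

def charPoly (c k : ℂ) : ℂ := k ^ 4 + (c - 2) * k ^ 2 - (2 * c + 1) * (c - 1)

section PlanarModes

variable {ι : Type*} (s : Finset ι) (c : ℂ) {a b k φ : ι → ℂ} {x y : ℝ → ℂ}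

theorem planar_first_eq (hk : ∀ i ∈ s, k i ≠ 0) (hb : ∀ i ∈ s, b i = planarRatio c (k i) * a i)
    (hx : x = fun u : ℝ => ∑ i ∈ s, a i * cos (k i * u + φ i))
    (hy : y = fun u : ℝ => ∑ i ∈ s, b i * sin (k i * u + φ i)) (t : ℝ) :
    deriv (deriv x) t - 2 * deriv y t - (1 + 2 * c) * x t = 0 := by
  subst hx hy
  rw [deriv_sum_mul_cos_mul_add, deriv_sum_mul_sin_mul_add, deriv_sum_mul_sin_mul_add]
  simp only [Finset.mul_sum, ← Finset.sum_sub_distrib]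
  refine Finset.sum_eq_zero fun i hi => ?_
  have := hk i hi
  rw [hb i hi, planarRatio]
  field_simp
  ring

theorem planar_second_eq (hk : ∀ i ∈ s, k i ≠ 0) (hb : ∀ i ∈ s, b i = planarRatio c (k i) * a i)
    (hx : x = fun u : ℝ => ∑ i ∈ s, a i * cos (k i * u + φ i))
    (hy : y = fun u : ℝ => ∑ i ∈ s, b i * sin (k i * u + φ i)) (t : ℝ) :
    deriv (deriv y) t + 2 * deriv x t + (c - 1) * y t =
      ∑ i ∈ s, a i * (charPoly c (k i) / (2 * k i)) * sin (k i * t + φ i) := by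
  subst hx hy
  rw [deriv_sum_mul_sin_mul_add, deriv_sum_mul_cos_mul_add, deriv_sum_mul_cos_mul_add]
  simp only [Finset.mul_sum, ← Finset.sum_add_distrib]
  refine Finset.sum_congr rfl fun i hi => ?_
  have := hk i hi
  rw [hb i hi, planarRatio, charPoly]
  field_simp
  ring

end PlanarModes

theorem charPoly_eq_zero_of_sq_eq {c k s : ℂ} (hs : s ^ 2 = 9 * c ^ 2 - 8 * c)
    (hk : k ^ 2 = (2 - c + s) / 2) : charPoly c k = 0 := by
  rw [charPoly]
  linear_combination (k ^ 2 + (2 - c + s) / 2 + c - 2) * hk + hs / 4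

theorem planarRatio_I_mul (c l : ℂ) :
    planarRatio c (I * l) = I * (-(l ^ 2 - 2 * c - 1) / (2 * l)) := by
  rcases eq_or_ne l 0 with rfl | hl
  · simp [planarRatio]
  rw [planarRatio]
  field_simp
  ring_nf
  simp only [I_sq]
  ring

theorem planarRatio_of_sq_eq {c ν : ℂ} (h : ν ^ 2 = c) :
    planarRatio c ν = -(1 / (2 * ν)) - 3 * ν / 2 := by
  subst h
  rcases eq_or_ne ν 0 with rfl | hν
  · simp [planarRatio]
  rw [planarRatio]
  field_simp
  ring

theorem charPoly_div_of_sq_eq {c ν : ℂ} (h : ν ^ 2 = c) :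
    charPoly c ν / (2 * ν) = 1 / (2 * ν) - ν / 2 := by
  subst h
  rcases eq_or_ne ν 0 with rfl | hν
  · simp
  rw [charPoly]
  field_simp
  ring

theorem abs_two_sub_lt_sqrt {c : ℝ} (hc : 1 < c) : |2 - c| < √(9 * c ^ 2 - 8 * c) := by
  rw [← Real.sqrt_sq_eq_abs]
  exact Real.sqrt_lt_sqrt (sq_nonneg _) (by nlinarith)

theorem sq_sqrt_discr {c : ℝ} (hc : 1 < c) :
    ((√(9 * c ^ 2 - 8 * c) : ℝ) : ℂ) ^ 2 = 9 * c ^ 2 - 8 * c := by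
  exact_mod_cast Real.sq_sqrt (by nlinarith)

theorem sqrt_pos_and_charPoly_eq_zero {c : ℝ} (hc : 1 < c) :
    0 < √((2 - c + √(9 * c ^ 2 - 8 * c)) / 2) ∧
      charPoly c (√((2 - c + √(9 * c ^ 2 - 8 * c)) / 2) : ℝ) = 0 := by
  have hpos : 0 < (2 - c + √(9 * c ^ 2 - 8 * c)) / 2 := by
    linarith [(abs_lt.1 (abs_two_sub_lt_sqrt hc)).1]
  refine ⟨Real.sqrt_pos.2 hpos, charPoly_eq_zero_of_sq_eq (sq_sqrt_discr hc) ?_⟩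
  exact_mod_cast Real.sq_sqrt hpos.le

theorem sqrt_pos_and_charPoly_I_mul_eq_zero {c : ℝ} (hc : 1 < c) :
    0 < √((c - 2 + √(9 * c ^ 2 - 8 * c)) / 2) ∧
      charPoly c (I * (√((c - 2 + √(9 * c ^ 2 - 8 * c)) / 2) : ℝ)) = 0 := by
  have hpos : 0 < (c - 2 + √(9 * c ^ 2 - 8 * c)) / 2 := by
    linarith [(abs_lt.1 (abs_two_sub_lt_sqrt hc)).2]
  refine ⟨Real.sqrt_pos.2 hpos, charPoly_eq_zero_of_sq_eq (s := -√(9 * c ^ 2 - 8 * c))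
    (by rw [neg_sq]; exact sq_sqrt_discr hc) ?_⟩
  have hsq : ((√((c - 2 + √(9 * c ^ 2 - 8 * c)) / 2) : ℝ) : ℂ) ^ 2
      = (c - 2 + √(9 * c ^ 2 - 8 * c)) / 2 := by
    exact_mod_cast Real.sq_sqrt hpos.le
  rw [mul_pow, I_sq, hsq]
  ring

end ERTBP

open ERTBP

/-- The modified linear solution for the coupling of the z-direction motion
into the y-direction (associated with the breaking of the S2-type symmetry)
solves the modified linear system `x'' − 2y' − (1+2c2)x = 0`,
`y'' + 2x' + (c2−1)y = η·d0000·z`, `z'' + c2·z = 0`. -/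
theorem ertbp_modified_linear_solution_z_to_y (c2 : ℝ) (hc2 : 1 < c2)
    (ω0 ν0 lam0 κ1 κ2 κ3 d0000 : ℝ)
    (hω0 : ω0 = Real.sqrt ((2 - c2 + Real.sqrt (9 * c2 ^ 2 - 8 * c2)) / 2))
    (hν0 : ν0 = Real.sqrt c2)
    (hlam0 : lam0 = Real.sqrt ((c2 - 2 + Real.sqrt (9 * c2 ^ 2 - 8 * c2)) / 2))
    (hκ1 : κ1 = -(ω0 ^ 2 + 2 * c2 + 1) / (2 * ω0))
    (hκ2 : κ2 = -(lam0 ^ 2 - 2 * c2 - 1) / (2 * lam0))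
    (hd : d0000 = 1 / (2 * ν0) - ν0 / 2)
    (hκ3 : κ3 = -(1 / (2 * ν0)) - 3 * ν0 / 2)
    (η α1 α2 φ1 φ2 : ℝ) (α3 φ3 : ℂ) (x y z : ℝ → ℂ)
    (hx : x = fun f : ℝ =>
      (α1 : ℂ) * Complex.cos ((ω0 : ℂ) * f + (φ1 : ℂ))
        + (η : ℂ) * (α2 : ℂ) * Complex.cos ((ν0 : ℂ) * f + (φ2 : ℂ))
        + α3 * Complex.cos (Complex.I * (lam0 : ℂ) * f + φ3))
    (hy : y = fun f : ℝ =>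
      (κ1 : ℂ) * (α1 : ℂ) * Complex.sin ((ω0 : ℂ) * f + (φ1 : ℂ))
        + (η : ℂ) * (κ3 : ℂ) * (α2 : ℂ) * Complex.sin ((ν0 : ℂ) * f + (φ2 : ℂ))
        + Complex.I * (κ2 : ℂ) * α3 * Complex.sin (Complex.I * (lam0 : ℂ) * f + φ3))
    (hz : z = fun f : ℝ => (α2 : ℂ) * Complex.sin ((ν0 : ℂ) * f + (φ2 : ℂ))) :
    ∀ f : ℝ,
      deriv (deriv x) f - 2 * deriv y f - (1 + 2 * (c2 : ℂ)) * x f = 0 ∧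
      deriv (deriv y) f + 2 * deriv x f + ((c2 : ℂ) - 1) * y f
        = (η : ℂ) * (d0000 : ℂ) * z f ∧
      deriv (deriv z) f + (c2 : ℂ) * z f = 0 := by
  intro f
  obtain ⟨hω0pos, hpω⟩ : 0 < ω0 ∧ charPoly c2 ω0 = 0 := hω0 ▸ sqrt_pos_and_charPoly_eq_zero hc2
  obtain ⟨hlam0pos, hplam⟩ : 0 < lam0 ∧ charPoly c2 (I * lam0) = 0 :=
    hlam0 ▸ sqrt_pos_and_charPoly_I_mul_eq_zero hc2
  have hν0pos : 0 < ν0 := hν0 ▸ Real.sqrt_pos.2 (by linarith)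
  have hν0sq : (ν0 : ℂ) ^ 2 = c2 := by rw [hν0]; exact_mod_cast Real.sq_sqrt (by linarith)
  set k : Fin 3 → ℂ := ![ω0, ν0, I * lam0]
  set a : Fin 3 → ℂ := ![α1, η * α2, α3]
  set b : Fin 3 → ℂ := ![κ1 * α1, η * κ3 * α2, I * κ2 * α3]
  set φ : Fin 3 → ℂ := ![φ1, φ2, φ3]
  have hk : ∀ i ∈ univ, k i ≠ 0 := by
    simp [Fin.forall_fin_succ, k, hω0pos.ne', hν0pos.ne', hlam0pos.ne']
  have hκ1' : planarRatio c2 ω0 = κ1 := by rw [hκ1, planarRatio]; push_cast; rfl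
  have hκ2' : planarRatio c2 (I * lam0) = I * κ2 := by rw [planarRatio_I_mul, hκ2]; push_cast; rfl
  have hκ3' : planarRatio c2 ν0 = κ3 := by rw [planarRatio_of_sq_eq hν0sq, hκ3]; push_cast; rfl
  have hb : ∀ i ∈ univ, b i = planarRatio c2 (k i) * a i := by
    intro i _
    fin_cases i <;> simp [b, k, a, hκ1', hκ2', hκ3']
    ring
  have hxs : x = fun u : ℝ => ∑ i, a i * cos (k i * u + φ i) := by
    rw [hx]; funext u; simp [Fin.sum_univ_three, a, k, φ]
  have hys : y = fun u : ℝ => ∑ i, b i * sin (k i * u + φ i) := by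
    rw [hy]; funext u; simp [Fin.sum_univ_three, b, k, φ]
  refine ⟨planar_first_eq univ c2 hk hb hxs hys f, ?_, ?_⟩
  · rw [planar_second_eq univ c2 hk hb hxs hys f, Fin.sum_univ_three]
    simp only [k, a, φ, Matrix.cons_val_zero, Matrix.cons_val_one, Matrix.cons_val]
    rw [hpω, hplam, charPoly_div_of_sq_eq hν0sq, hd, hz]
    push_cast
    ring
  · rw [hz, deriv_mul_sin_mul_add, deriv_mul_cos_mul_add]
    linear_combination (-(α2 * sin (ν0 * f + φ2))) * hν0sq
end
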